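/- If dsol(A,B) = {y} and A^{−1}y is a singleton, then psol(A,B) = A^{−1}y. -/

import Mathlib

open Pointwise InnerProductSpace

variable {X : Type*} [NormedAddCommGroup X] [InnerProductSpace ℝ X]

/-- A set-valued operator `A : X ⇉ X` is monotone. -/
def SVMonotone (A : X → Set X) : Prop :=
  ∀ ⦃x y u v : X⦄, u ∈ A x → v ∈ A y → 0 ≤ ⟪x - y, u - v⟫_ℝ

/-- A set-valued operator is maximally monotone. -/
def SVMaxMonotone (A : X → Set X) : Prop :=
  SVMonotone A ∧ ∀ x u : X, (∀ y v, v ∈ A y → 0 ≤ ⟪x - y, u - v⟫_ℝ) → u ∈ A x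

/-- Set-valued inverse. -/
def SVInv (A : X → Set X) : X → Set X := fun u => {x | u ∈ A x}

/-- `B^∨ = (−Id) ∘ B ∘ (−Id)`. -/
def SVVee (B : X → Set X) : X → Set X := fun x => -(B (-x))

/-- `B^{−∨} = (B⁻¹)^∨`. -/
def SVInvVee (B : X → Set X) : X → Set X := SVVee (SVInv B)

/-- Primal Attouch–Théra solutions: `zer (A + B)`. -/
def psol (A B : X → Set X) : Set X := {x | (0 : X) ∈ A x + B x}

/-- Dual Attouch–Théra solutions: `zer (A⁻¹ + B^{−∨})`. -/
def dsol (A B : X → Set X) : Set X := {y | (0 : X) ∈ SVInv A y + SVInvVee B y}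

/-! Both solution sets are projections of the Kuhn–Tucker set `{(x, u) | u ∈ A x, -u ∈ B x}`:
`psol` onto the first and `dsol` onto the second coordinate. A unique dual solution `y` therefore
forces every primal solution into `A⁻¹ y`, and the pair over `y` puts the single point of `A⁻¹ y`
into `psol`. -/

section

variable {E : Type*} [NormedAddCommGroup E] {A B : E → Set E}

theorem mem_psol_iff {x : E} : x ∈ psol A B ↔ ∃ u, u ∈ A x ∧ -u ∈ B x := by
  constructor
  · rintro ⟨u, hu, v, hv, huv⟩
    exact ⟨u, hu, eq_neg_of_add_eq_zero_right huv ▸ hv⟩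
  · rintro ⟨u, hu, hv⟩
    exact ⟨u, hu, -u, hv, add_neg_cancel u⟩

theorem mem_dsol_iff {u : E} : u ∈ dsol A B ↔ ∃ x, u ∈ A x ∧ -u ∈ B x := by
  constructor
  · rintro ⟨x, hx, w, hw, hxw⟩
    obtain rfl := eq_neg_of_add_eq_zero_right hxw
    exact ⟨x, hx, by simpa [SVInvVee, SVVee, SVInv] using hw⟩
  · rintro ⟨x, hx, hv⟩
    exact ⟨x, hx, -x, by simpa [SVInvVee, SVVee, SVInv] using hv, add_neg_cancel x⟩

theorem psol_subset_svInv_of_dsol_subset {y : E} (hy : dsol A B ⊆ {y}) :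
    psol A B ⊆ SVInv A y := by
  intro x hx
  obtain ⟨u, hu, hv⟩ := mem_psol_iff.1 hx
  obtain rfl : u = y := hy (mem_dsol_iff.2 ⟨x, hu, hv⟩)
  exact hu

theorem svInv_subset_psol {y : E} (hy : y ∈ dsol A B) (hsub : (SVInv A y).Subsingleton) :
    SVInv A y ⊆ psol A B := by
  intro x hx
  obtain ⟨x', hx', hv⟩ := mem_dsol_iff.1 hy
  obtain rfl : x = x' := hsub hx hx'
  exact mem_psol_iff.2 ⟨y, hx, hv⟩

end

theorem psol_eq_Ainv_y_general (A B : X → Set X) (y : X)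
    (hy : dsol A B = {y}) (hsingle : ∃ a : X, SVInv A y = {a}) :
    psol A B = SVInv A y := by
  obtain ⟨a, ha⟩ := hsingle
  refine (psol_subset_svInv_of_dsol_subset hy.subset).antisymm ?_
  exact svInv_subset_psol (hy ▸ rfl) (ha ▸ Set.subsingleton_singleton)

/-- If `dsol (A, B) = {y}` and `A⁻¹ y` is a singleton, then `psol (A, B) = A⁻¹ y`. -/
theorem psol_eq_Ainv_y (A B : X → Set X)
    (hA : SVMaxMonotone A) (hB : SVMaxMonotone B) (y : X)
    (hy : dsol A B = {y}) (hsingle : ∃ a : X, SVInv A y = {a}) :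
    psol A B = SVInv A y :=
  psol_eq_Ainv_y_general A B y hy hsingle
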